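/- arXiv:2508.00613 — 5 statements merged into one kernel-verified Lean document; each statement's English description precedes it below -/
import Mathlib

section
/- Let r : ℕ → ℕ and l : ℕ → Fin m be sequences along an infinite trace, and let Je : ℕ → Fin m → Prop describe which 'justice assumptions' hold at each time. Suppose (1) r(t+1) ≤ r(t) for all t, (2) whenever r(t+1) = r(t) we have l(t+1) ≤ l(t) (as numbers), and (3) whenever Je (t+1) (l t) holds, r(t+1) < r(t). If every i : Fin m satisfies Je t i for infinitely many t, then we obtain a contradiction; i.e., no such infinite trace exists. -/
theorem ranking_function_progress_contradiction
    {m : ℕ} (r : ℕ → ℕ) (l : ℕ → Fin m) (Je : ℕ → Fin m → Prop)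
    (h1 : ∀ t, r (t + 1) ≤ r t)
    (h2 : ∀ t, r (t + 1) = r t → (l (t + 1) : ℕ) ≤ (l t : ℕ))
    (h3 : ∀ t, Je (t + 1) (l t) → r (t + 1) < r t)
    (hfair : ∀ i : Fin m, ∀ N, ∃ t ≥ N, Je t i) :
    False := by
  have hr : Antitone r := antitone_nat_of_succ_le h1
  -- r is eventually constant
  obtain ⟨v, T, hvT, hvmin⟩ : ∃ v T, r T = v ∧ ∀ t, v ≤ r t := by
    obtain ⟨v, ⟨T, hT⟩, hmin⟩ := (Nat.lt_wfRel.wf).has_min (Set.range r) ⟨r 0, 0, rfl⟩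
    exact ⟨v, T, hT, fun t => not_lt.1 (hmin (r t) ⟨t, rfl⟩)⟩
  have hrconst : ∀ t, T ≤ t → r t = v := fun t ht =>
    le_antisymm (hvT ▸ hr ht) (hvmin t)
  -- l is eventually antitone, hence eventually constant
  have hlanti : ∀ a b, T ≤ a → a ≤ b → (l b : ℕ) ≤ (l a : ℕ) := by
    intro a b hTa hab
    induction b with
    | zero =>
      have : a = 0 := by omega
      subst this; exact le_rfl
    | succ n ih =>
      rcases Nat.lt_or_ge a (n + 1) with h | h
      · have hTn : T ≤ n := by omega
        exact le_trans
          (h2 n ((hrconst (n+1) (by omega)).trans (hrconst n hTn).symm))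
          (ih (by omega))
      · have : a = n + 1 := by omega
        subst this; exact le_rfl
  obtain ⟨w, ⟨T', hT'ge, hT'w⟩, hwmin'⟩ := (Nat.lt_wfRel.wf).has_min
    {n | ∃ t, T ≤ t ∧ (l t : ℕ) = n} ⟨(l T : ℕ), T, le_rfl, rfl⟩
  have hwmin : ∀ n ∈ {n | ∃ t, T ≤ t ∧ (l t : ℕ) = n}, w ≤ n :=
    fun n hn => not_lt.1 (hwmin' n hn)
  have hlconst : ∀ t, T' ≤ t → (l t : ℕ) = w := by
    intro t ht
    exact le_antisymm (hT'w ▸ hlanti T' t hT'ge ht)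
      (hwmin _ ⟨t, le_trans hT'ge ht, rfl⟩)
  obtain ⟨t, htge, hJe⟩ := hfair (l T') (T' + 1)
  obtain ⟨s, rfl⟩ : ∃ s, t = s + 1 := ⟨t - 1, by omega⟩
  have hls : l s = l T' := Fin.ext <| by
    rw [hlconst s (by omega), hT'w]
  have := h3 s (hls ▸ hJe)
  rw [hrconst (s+1) (by omega), hrconst s (by omega)] at this
  exact lt_irrefl _ this
end

section
/- Let π : ℕ → X be a trace, c : ℕ → Fin n a counter, and Js : Fin n → X → Prop. Suppose: whenever Js (c t) (π (t+1)) holds we have c(t+1) = c(t) ⊕ 1 (mod n), otherwise c(t+1) = c(t); and suppose for every t and every j, if c(t) = j forever after t (i.e., ∀ s ≥ t, c s = j) then there exists s ≥ t with Js j (π (s+1)). Then for every j : Fin n, Js j (π (t+1)) holds for infinitely many t. -/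
section Progress

variable {ι X : Type*} (π : ℕ → X) (c : ℕ → ι) (Js : ι → X → Prop)

/-- If the guarantee of the active counter value never held again, `hstay` would freeze the
counter from `t` on, and `hprog` would then produce the guarantee after all. -/
theorem exists_ge_eq_and_guarantee
    (hstay : ∀ t, ¬ Js (c t) (π (t + 1)) → c (t + 1) = c t)
    (hprog : ∀ t, ∀ j, (∀ s ≥ t, c s = j) → ∃ s ≥ t, Js j (π (s + 1))) (t : ℕ) :
    ∃ s ≥ t, c s = c t ∧ Js (c t) (π (s + 1)) := by
  by_contra! hnone
  have hfrozen : ∀ s ≥ t, c s = c t := by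
    intro s hs
    induction s, hs using Nat.le_induction with
    | base => rfl
    | succ s hs ih => rw [hstay s (ih ▸ hnone s hs ih), ih]
  obtain ⟨s, hs, hJ⟩ := hprog t (c t) hfrozen
  exact hnone s hs (hfrozen s hs) hJ

end Progress

theorem exists_ge_eq_add_natCast {M : Type*} [AddMonoidWithOne M] (c : ℕ → M)
    (hstep : ∀ t, ∃ s > t, c s = c t + 1) (t m : ℕ) : ∃ s ≥ t, c s = c t + m := by
  induction m with
  | zero => exact ⟨t, le_rfl, by simp⟩
  | succ m ih =>
    obtain ⟨s, hs, hcs⟩ := ih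
    obtain ⟨s', hs', hcs'⟩ := hstep s
    exact ⟨s', by omega, by rw [hcs', hcs, Nat.cast_succ, add_assoc]⟩

open Fin.NatCast in
theorem Fin.exists_ge_eq_of_forall_exists_gt_eq_add_one {n : ℕ} [NeZero n] (c : ℕ → Fin n)
    (hstep : ∀ t, ∃ s > t, c s = c t + 1) (t : ℕ) (j : Fin n) : ∃ s ≥ t, c s = j := by
  obtain ⟨s, hs, hcs⟩ := exists_ge_eq_add_natCast c hstep t (j - c t).val
  exact ⟨s, hs, by rw [hcs, Fin.cast_val_eq_self, add_sub_cancel]⟩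

theorem round_robin_substrategies_satisfy_all_guarantees
    {X : Type*} {n : ℕ} [NeZero n] (π : ℕ → X) (c : ℕ → Fin n) (Js : Fin n → X → Prop)
    (hswitch : ∀ t, Js (c t) (π (t + 1)) → c (t + 1) = c t + 1)
    (hstay : ∀ t, ¬ Js (c t) (π (t + 1)) → c (t + 1) = c t)
    (hprog : ∀ t, ∀ j : Fin n, (∀ s ≥ t, c s = j) → ∃ s ≥ t, Js j (π (s + 1))) :
    ∀ j : Fin n, ∀ N, ∃ t ≥ N, Js j (π (t + 1)) := by
  have hguarantee := exists_ge_eq_and_guarantee π c Js hstay hprog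
  have hstep : ∀ t, ∃ s > t, c s = c t + 1 := fun t => by
    obtain ⟨s, hs, hcs, hJ⟩ := hguarantee t
    exact ⟨s + 1, by omega, by rw [hswitch s (hcs ▸ hJ), hcs]⟩
  intro j N
  obtain ⟨s, hs, hcs⟩ := Fin.exists_ge_eq_of_forall_exists_gt_eq_add_one c hstep N j
  obtain ⟨s', hs', -, hJ⟩ := hguarantee s
  exact ⟨s', by omega, hcs ▸ hJ⟩
end

section
/- Combining the two substrategies of the running example with a counter c ∈ {1,2} (switch c when the current goal x = min resp. x = max is reached): for every parameter pair min + 1 < max, every initial x0 with min ≤ x0 ≤ max, and every disturbance sequence d : ℕ → ℤ with -1 ≤ d t ≤ 1 for all t, such that d t < 0 for infinitely many t and d t > 0 for infinitely many t, the resulting trace satisfies min ≤ x t ≤ max for all t, x t = min for infinitely many t, and x t = max for infinitely many t. -/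
theorem robot_controller_gr1_correctness
    (min max : ℤ) (hmm : min + 1 < max)
    (x c d : ℕ → ℤ)
    (hd : ∀ t, -1 ≤ d t ∧ d t ≤ 1)
    (hdneg : ∀ N, ∃ t ≥ N, d t < 0)
    (hdpos : ∀ N, ∃ t ≥ N, d t > 0)
    (hx0 : min ≤ x 0 ∧ x 0 ≤ max)
    (hc0 : c 0 = 1)
    (hc : ∀ t, c (t + 1) =
      if (c t = 1 ∧ x t = min) ∨ (c t = 2 ∧ x t = max) then 3 - c t else c t)
    (hx : ∀ t, x (t + 1) =
      if c (t + 1) = 1 then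
        (if min + 1 ≤ x t + d t then x t - 1 + d t else x t + d t)
      else
        (if x t + d t ≤ max - 1 then x t + 1 + d t else x t + d t)) :
    (∀ t, min ≤ x t ∧ x t ≤ max) ∧
    (∀ N, ∃ t ≥ N, x t = min) ∧
    (∀ N, ∃ t ≥ N, x t = max) := by
  -- combined invariant: safety and c ∈ {1,2}
  have hinv : ∀ t, (min ≤ x t ∧ x t ≤ max) ∧ (c t = 1 ∨ c t = 2) := by
    intro t
    induction t with
    | zero => exact ⟨hx0, Or.inl hc0⟩
    | succ t ih =>
      have hct := hc t
      have hxt := hx t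
      have hdt := hd t
      obtain ⟨⟨h1, h2⟩, h3⟩ := ih
      split_ifs at hct hxt <;> omega
  -- Lemma A: from c = 1, eventually reach x = min with c = 1
  have lemA : ∀ n : ℕ, ∀ t, c t = 1 → x t ≤ min + n →
      ∃ s ≥ t, x s = min ∧ c s = 1 := by
    intro n
    induction n with
    | zero =>
      intro t h1 h2
      exact ⟨t, le_refl t, by have := (hinv t).1; omega, h1⟩
    | succ n ih =>
      intro t h1 h2
      by_cases hxm : x t = min
      · exact ⟨t, le_refl t, hxm, h1⟩
      · obtain ⟨s, hs, hds⟩ := hdneg t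
        have key : ∀ k, (∃ r, t ≤ r ∧ x r = min ∧ c r = 1) ∨
            (c (t + k) = 1 ∧ x (t + k) ≤ x t) := by
          intro k
          induction k with
          | zero => exact Or.inr ⟨h1, le_refl _⟩
          | succ k ihk =>
            rcases ihk with h | ⟨hck, hxk⟩
            · exact Or.inl h
            · by_cases hm : x (t + k) = min
              · exact Or.inl ⟨t + k, Nat.le_add_right t k, hm, hck⟩
              · right
                show c (t + k + 1) = 1 ∧ x (t + k + 1) ≤ x t
                have hct := hc (t + k)
                have hxt := hx (t + k)
                have hdt := hd (t + k)
                have hsafe := (hinv (t + k)).1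
                split_ifs at hct hxt <;> omega
        rcases key (s - t) with h | ⟨hcs, hxs⟩
        · obtain ⟨r, hr1, hr2, hr3⟩ := h
          exact ⟨r, hr1, hr2, hr3⟩
        · rw [Nat.add_sub_cancel' hs] at hcs hxs
          by_cases hm : x s = min
          · exact ⟨s, hs, hm, hcs⟩
          · have hct := hc s
            have hxt := hx s
            have hdt := hd s
            have hsafe := (hinv s).1
            have hsafe' := (hinv (s + 1)).1
            have hcs1 : c (s + 1) = 1 := by split_ifs at hct <;> omega
            have hbound : x (s + 1) ≤ min + n := by
              rw [hcs1] at hxt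
              simp only [if_pos rfl] at hxt
              split_ifs at hxt <;> omega
            obtain ⟨s', hs', h1', h2'⟩ := ih (s + 1) hcs1 hbound
            exact ⟨s', by omega, h1', h2'⟩
  -- Lemma B: from c = 2, eventually reach x = max with c = 2
  have lemB : ∀ n : ℕ, ∀ t, c t = 2 → max - n ≤ x t →
      ∃ s ≥ t, x s = max ∧ c s = 2 := by
    intro n
    induction n with
    | zero =>
      intro t h1 h2
      exact ⟨t, le_refl t, by have := (hinv t).1; omega, h1⟩
    | succ n ih =>
      intro t h1 h2
      by_cases hxm : x t = max
      · exact ⟨t, le_refl t, hxm, h1⟩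
      · obtain ⟨s, hs, hds⟩ := hdpos t
        have key : ∀ k, (∃ r, t ≤ r ∧ x r = max ∧ c r = 2) ∨
            (c (t + k) = 2 ∧ x t ≤ x (t + k)) := by
          intro k
          induction k with
          | zero => exact Or.inr ⟨h1, le_refl _⟩
          | succ k ihk =>
            rcases ihk with h | ⟨hck, hxk⟩
            · exact Or.inl h
            · by_cases hm : x (t + k) = max
              · exact Or.inl ⟨t + k, Nat.le_add_right t k, hm, hck⟩
              · right
                show c (t + k + 1) = 2 ∧ x t ≤ x (t + k + 1)
                have hct := hc (t + k)
                have hxt := hx (t + k)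
                have hdt := hd (t + k)
                have hsafe := (hinv (t + k)).1
                split_ifs at hct hxt <;> omega
        rcases key (s - t) with h | ⟨hcs, hxs⟩
        · obtain ⟨r, hr1, hr2, hr3⟩ := h
          exact ⟨r, hr1, hr2, hr3⟩
        · rw [Nat.add_sub_cancel' hs] at hcs hxs
          by_cases hm : x s = max
          · exact ⟨s, hs, hm, hcs⟩
          · have hct := hc s
            have hxt := hx s
            have hdt := hd s
            have hsafe := (hinv s).1
            have hsafe' := (hinv (s + 1)).1
            have hcs2 : c (s + 1) = 2 := by split_ifs at hct <;> omega
            have hbound : max - n ≤ x (s + 1) := by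
              split_ifs at hxt <;> omega
            obtain ⟨s', hs', h1', h2'⟩ := ih (s + 1) hcs2 hbound
            exact ⟨s', by omega, h1', h2'⟩
  refine ⟨fun t => (hinv t).1, ?_, ?_⟩
  · intro N
    rcases (hinv N).2 with h1 | h2
    · obtain ⟨s, hs, hxs, _⟩ := lemA (x N - min).toNat N h1
        (by have := (hinv N).1; omega)
      exact ⟨s, hs, hxs⟩
    · obtain ⟨s, hs, hxs, hcs⟩ := lemB (max - x N).toNat N h2
        (by have := (hinv N).1; omega)
      have hcs1 : c (s + 1) = 1 := by
        have hct := hc s; split_ifs at hct <;> omega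
      obtain ⟨s', hs', hxs', _⟩ := lemA (x (s + 1) - min).toNat (s + 1) hcs1
        (by have := (hinv (s + 1)).1; omega)
      exact ⟨s', by omega, hxs'⟩
  · intro N
    rcases (hinv N).2 with h1 | h2
    · obtain ⟨s, hs, hxs, hcs⟩ := lemA (x N - min).toNat N h1
        (by have := (hinv N).1; omega)
      have hcs2 : c (s + 1) = 2 := by
        have hct := hc s; split_ifs at hct <;> omega
      obtain ⟨s', hs', hxs', _⟩ := lemB (max - x (s + 1)).toNat (s + 1) hcs2
        (by have := (hinv (s + 1)).1; omega)
      exact ⟨s', by omega, hxs'⟩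
    · obtain ⟨s, hs, hxs, _⟩ := lemB (max - x N).toNat N h2
        (by have := (hinv N).1; omega)
      exact ⟨s, hs, hxs⟩
end

section
/- Let Term be first-order terms with holes, g a term containing hole h, and suppose s1 maps h to f(a1,…,ak) and s2 maps h to f(b1,…,bk) for the same k-ary function symbol f. Introduce fresh holes h1,…,hk, let g' = g[h ← f(h1,…,hk)], s1' = (s1 \ {h}) ∪ {hi ↦ ai}, s2' = (s2 \ {h}) ∪ {hi ↦ bi}. Then g'[s1'] = g[s1] and g'[s2'] = g[s2]. -/
/-- First-order terms over function symbols `F` with hole variables from `H`. -/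
inductive Term (F H : Type) : Type where
  | hole : H → Term F H
  | app : F → List (Term F H) → Term F H

/-- Apply a substitution of holes by terms. -/
def Term.subst {F H : Type} (s : H → Term F H) : Term F H → Term F H
  | .hole h => s h
  | .app f ts => .app f (ts.attach.map (fun ⟨t, _⟩ => Term.subst s t))

/-- The list of holes occurring in a term. -/
def Term.holesList {F H : Type} : Term F H → List H
  | .hole y => [y]
  | .app _ ts => ts.attach.flatMap (fun ⟨t, _⟩ => Term.holesList t)

/-- The hole `x` occurs in a term. -/
def Term.occurs {F H : Type} (x : H) (t : Term F H) : Prop :=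
  x ∈ t.holesList

theorem Term.subst_app {F H : Type} (s : H → Term F H) (f : F) (ts : List (Term F H)) :
    Term.subst s (.app f ts) = .app f (ts.map (Term.subst s)) := by
  simp [Term.subst]

theorem Term.occurs_app {F H : Type} (x : H) (f : F) (ts : List (Term F H)) :
    Term.occurs x (.app f ts) ↔ ∃ t ∈ ts, Term.occurs x t := by
  simp [Term.occurs, Term.holesList]

theorem push_aux {F H : Type} [DecidableEq H]
    (h : H) (f : F) (k : ℕ) (a : Fin k → Term F H) (hs : Fin k → H)
    (s s' : H → Term F H)
    (hsh : s h = Term.app f ((List.finRange k).map a))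
    (hsi : ∀ i, s' (hs i) = a i)
    (hagree : ∀ x, x ≠ h → x ∉ Set.range hs → s' x = s x) :
    ∀ t : Term F H, (∀ i, ¬ Term.occurs (hs i) t) →
      Term.subst s'
        (Term.subst (fun x => if x = h then
            Term.app f ((List.finRange k).map (fun i => Term.hole (hs i)))
          else Term.hole x) t)
      = Term.subst s t := by
  intro t
  induction t using Term.rec (motive_2 := fun ts => ∀ t ∈ ts, (∀ i, ¬ Term.occurs (hs i) t) →
      Term.subst s'
        (Term.subst (fun x => if x = h then
            Term.app f ((List.finRange k).map (fun i => Term.hole (hs i)))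
          else Term.hole x) t)
      = Term.subst s t) with
  | hole x =>
    intro hnot
    by_cases hx : x = h
    · subst hx
      simp only [Term.subst]
      rw [if_pos trivial, Term.subst_app, hsh]
      simp only [List.map_map]
      congr 1
      apply List.map_congr_left
      intro i _
      simp [Function.comp, Term.subst, hsi]
    · simp only [Term.subst, if_neg hx]
      apply hagree x hx
      rintro ⟨i, rfl⟩
      exact hnot i (by simp [Term.occurs, Term.holesList])
  | app fn ts ih =>
    intro hnot
    simp only [Term.subst_app, List.map_map]
    congr 1
    apply List.map_congr_left
    intro t ht
    exact ih t ht (fun i hi => hnot i ((Term.occurs_app _ _ _).mpr ⟨t, ht, hi⟩))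
  | nil => rename_i t ht hnot; simp at ht
  | cons hd tl ih1 ih2 =>
    rename_i t ht hnot
    rcases List.mem_cons.mp ht with rfl | ht
    · exact ih1 hnot
    · exact ih2 t ht hnot

theorem push_function_symbol_into_generalizer_preserves_instances
    {F H : Type} [DecidableEq H]
    (g : Term F H) (h : H) (f : F) (k : ℕ)
    (a b : Fin k → Term F H) (hs : Fin k → H)
    (s1 s2 s1' s2' : H → Term F H)
    (hinj : Function.Injective hs)
    (hfresh : ∀ i, ¬ Term.occurs (hs i) g)
    (hs1h : s1 h = Term.app f ((List.finRange k).map a))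
    (hs2h : s2 h = Term.app f ((List.finRange k).map b))
    (hs1i : ∀ i, s1' (hs i) = a i)
    (hs2i : ∀ i, s2' (hs i) = b i)
    (hagree1 : ∀ x, x ≠ h → x ∉ Set.range hs → s1' x = s1 x)
    (hagree2 : ∀ x, x ≠ h → x ∉ Set.range hs → s2' x = s2 x) :
    (Term.subst s1'
        (Term.subst (fun x => if x = h then
            Term.app f ((List.finRange k).map (fun i => Term.hole (hs i)))
          else Term.hole x) g)
      = Term.subst s1 g) ∧
    (Term.subst s2'
        (Term.subst (fun x => if x = h then
            Term.app f ((List.finRange k).map (fun i => Term.hole (hs i)))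
          else Term.hole x) g)
      = Term.subst s2 g) := by
  exact ⟨push_aux h f k a hs s1 s1' hs1h hs1i hagree1 g hfresh,
         push_aux h f k b hs s2 s2' hs2h hs2i hagree2 g hfresh⟩
end

section
/- Let f : Fin n → ℕ → Prop and suppose there is an infinite trace structure where a 'scheduler' c : ℕ → Fin n eventually stabilizes at some j (∃ T, ∀ t ≥ T, c t = j). If for each j the stabilized substrategy guarantees ∃ s ≥ T, goal j s whenever c is constantly j from T on, and reaching goal j forces c to change at the next step, then c cannot stabilize; hence c changes value infinitely often. -/
theorem scheduler_cannot_stabilize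
    {n : ℕ} (c : ℕ → Fin n) (goal : Fin n → ℕ → Prop)
    (hprog : ∀ (j : Fin n) (T : ℕ), (∀ t ≥ T, c t = j) → ∃ s ≥ T, goal j s)
    (hswitch : ∀ t, goal (c t) t → c (t + 1) ≠ c t) :
    (¬ ∃ T, ∃ j : Fin n, ∀ t ≥ T, c t = j) ∧
    (∀ N, ∃ t ≥ N, c (t + 1) ≠ c t) := by
  have h1 : ¬ ∃ T, ∃ j : Fin n, ∀ t ≥ T, c t = j := by
    rintro ⟨T, j, hstab⟩
    obtain ⟨s, hs, hgoal⟩ := hprog j T hstab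
    have hcs : c s = j := hstab s hs
    have := hswitch s (by rw [hcs]; exact hgoal)
    exact this (by rw [hstab (s+1) (by omega), hcs])
  refine ⟨h1, fun N => ?_⟩
  by_contra h
  push_neg at h
  apply h1
  refine ⟨N, c N, fun t ht => ?_⟩
  induction t with
  | zero => rw [show N = 0 from by omega]
  | succ k ih =>
    rcases Nat.lt_or_ge N (k+1) with hlt | hge
    · have hk : k ≥ N := by omega
      rw [h k hk, ih hk]
    · have : N = k + 1 := by omega
      rw [this]
end
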